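/- Let K be a convex body in ℝⁿ and let p be a real polynomial in n variables of total degree d ≥ 1 with |p(z)| ≤ 1 for all z ∈ K. Let x, y, a ∈ ℝⁿ and b > 0 be such that the ellipse with parameters (a, b) through x in direction y is inscribed in K. Then b·|D_y p(x)| ≤ d·√(1 − p(x)²). -/

import Mathlib

/-!
Restricted to the inscribed ellipse `E`, the polynomial becomes `q θ = p (E θ)`, a real
trigonometric polynomial of degree at most `d` with `|q| ≤ 1`, `q 0 = p x` and
`q' 0 = b • D_y p x`; so the claim is Szegő's inequality `q'(0)² + d² q(0)² ≤ d²`.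
If it failed, `(q'(0) / d, q(0)) = R (cos φ, sin φ)` with `R > 1`. Then `R sin (dθ + φ) - q` has a
double zero at `0` and, since it alternates in sign at the `2d` extrema of `R sin (dθ + φ)` in a
period, `2d - 1` further zeros in `(0, 2π)`: `2d + 1` zeros, too many for a nonzero trigonometric
polynomial of degree `d`, which is `e^{-idθ}` times a polynomial of degree `2d` in `e^{iθ}`.
-/

/-- A convex body in ℝⁿ: a compact convex set with nonempty interior. -/
def IsConvexBody {n : ℕ} (K : Set (EuclideanSpace ℝ (Fin n))) : Prop :=
  IsCompact K ∧ Convex ℝ K ∧ (interior K).Nonempty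

/-- The ellipse with parameters `(a, b)` through `x` in direction `y`,
`θ ↦ (cos θ)•a + b(sin θ)•y + (x - a)`, is inscribed in `K`. -/
def InscribedEllipse {n : ℕ} (K : Set (EuclideanSpace ℝ (Fin n)))
    (x y a : EuclideanSpace ℝ (Fin n)) (b : ℝ) : Prop :=
  ∀ θ : ℝ, (Real.cos θ) • a + (b * Real.sin θ) • y + (x - a) ∈ K

/-- Directional derivative `D_y p(x) = ⟨∇p(x), y⟩` of a real polynomial in `n` variables. -/
noncomputable def dirDeriv {n : ℕ} (p : MvPolynomial (Fin n) ℝ)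
    (x y : EuclideanSpace ℝ (Fin n)) : ℝ :=
  ∑ i, MvPolynomial.eval x (MvPolynomial.pderiv i p) * y i

open Complex Polynomial
open scoped Real

lemma Polynomial.eq_zero_of_natDegree_lt_card_add_two {R : Type*} [CommRing R] [IsDomain R]
    {P : R[X]} {a : R} (ha : P.IsRoot a) (ha' : P.derivative.IsRoot a) (s : Finset R)
    (has : a ∉ s) (hs : ∀ z ∈ s, P.IsRoot z) (hdeg : P.natDegree < s.card + 2) : P = 0 := by
  by_contra hP
  obtain ⟨G, rfl⟩ : (X - C a) ^ 2 ∣ P :=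
    (le_rootMultiplicity_iff hP).1 ((one_lt_rootMultiplicity_iff_isRoot hP).2 ⟨ha, ha'⟩)
  have hG : G ≠ 0 := right_ne_zero_of_mul hP
  have hsG : s.val ⊆ G.roots := fun z hz => by
    have hza : z - a ≠ 0 := sub_ne_zero.2 fun h => has (h ▸ hz)
    rw [mem_roots hG]
    simpa [hza] using hs z hz
  have := card_le_degree_of_subset_roots hsG
  rw [natDegree_mul (pow_ne_zero _ (X_sub_C_ne_zero a)) hG, natDegree_pow, natDegree_X_sub_C]
    at hdeg
  omega

lemma MvPolynomial.hasDerivAt_eval {σ : Type*} [Fintype σ] {γ : ℝ → σ → ℝ} {γ' : σ → ℝ} {t : ℝ}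
    (hγ : ∀ i, HasDerivAt (fun t => γ t i) (γ' i) t) (p : MvPolynomial σ ℝ) :
    HasDerivAt (fun t => eval (γ t) p) (∑ i, eval (γ t) (pderiv i p) * γ' i) t := by
  classical
  induction p using MvPolynomial.induction_on with
  | C a => simpa using hasDerivAt_const t a
  | add p q hp hq =>
    simp only [map_add, add_mul, Finset.sum_add_distrib]
    exact hp.add hq
  | mul_X p i hp =>
    simp only [map_mul, eval_X]
    refine (hp.mul (hγ i)).congr_deriv ?_
    simp only [Derivation.leibniz, pderiv_X, Pi.single_apply, smul_eq_mul, map_add, map_mul,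
      eval_X, mul_ite, mul_one, mul_zero, apply_ite (eval (γ t)), map_zero, ite_mul, zero_mul,
      add_mul, Finset.sum_add_distrib, Finset.sum_ite_eq, Finset.mem_univ, if_true, Finset.sum_mul]
    rw [add_comm]
    congr 1
    exact Finset.sum_congr rfl fun j _ => by ring

lemma exists_finset_zeros_of_alternating {h : ℝ → ℝ} (hc : Continuous h) {v : ℤ → ℝ}
    (hv : StrictMono v) (hsign : ∀ j, h (v j) * h (v (j + 1)) < 0) (j₀ : ℤ) (m : ℕ) :
    ∃ S : Finset ℝ, S.card = m ∧ ↑S ⊆ Set.Ioo (v j₀) (v (j₀ + m)) ∧ ∀ θ ∈ S, h θ = 0 := by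
  have hzero (k : Fin m) : ∃ z ∈ Set.Ioo (v (j₀ + k)) (v (j₀ + k + 1)), h z = 0 := by
    have hle := (hv (lt_add_one (j₀ + k))).le
    rcases mul_neg_iff.1 (hsign (j₀ + k)) with ⟨h₁, h₂⟩ | ⟨h₁, h₂⟩
    · exact intermediate_value_Ioo' hle hc.continuousOn ⟨h₂, h₁⟩
    · exact intermediate_value_Ioo hle hc.continuousOn ⟨h₁, h₂⟩
  choose z hz hz0 using hzero
  have hz_mono : StrictMono z := fun k l hkl =>
    ((hz k).2.trans_le (hv.monotone (show j₀ + k + 1 ≤ j₀ + l by omega))).trans (hz l).1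
  refine ⟨Finset.univ.image z, by simp [Finset.card_image_of_injective _ hz_mono.injective],
    ?_, by simpa using hz0⟩
  simp only [Finset.coe_image, Finset.coe_univ, Set.image_univ, Set.range_subset_iff]
  intro k
  exact ⟨(hv.monotone (by omega)).trans_lt (hz k).1,
    (hz k).2.trans_le (hv.monotone (by have := k.2; omega))⟩

lemma exists_one_lt_mul_cos_mul_sin {u v : ℝ} (huv : 1 < u ^ 2 + v ^ 2) :
    ∃ R φ : ℝ, 1 < R ∧ R * Real.cos φ = u ∧ R * Real.sin φ = v := by
  let w : ℂ := ⟨u, v⟩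
  refine ⟨‖w‖, arg w, ?_, norm_mul_cos_arg w, norm_mul_sin_arg w⟩
  have : 1 < ‖w‖ ^ 2 := by rwa [Complex.sq_norm, normSq_apply, ← sq, ← sq]
  nlinarith [norm_nonneg w]

lemma abs_le_mul_sqrt_one_sub_sq {u v N : ℝ} (hN : 0 ≤ N) (h : u ^ 2 + N ^ 2 * v ^ 2 ≤ N ^ 2) :
    |u| ≤ N * √(1 - v ^ 2) := by
  rw [← Real.sqrt_sq hN, ← Real.sqrt_mul (sq_nonneg N)]
  exact Real.abs_le_sqrt (by linarith)

noncomputable def sinExtremum (N : ℕ) (φ : ℝ) (j : ℤ) : ℝ := (π / 2 + j * π - φ) / N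

section sinExtremum

variable {N : ℕ} (φ : ℝ)

lemma sin_mul_sinExtremum_add (hN : N ≠ 0) (j : ℤ) :
    Real.sin (N * sinExtremum N φ j + φ) = (-1) ^ j := by
  have : N * sinExtremum N φ j + φ = j * π + π / 2 := by simp only [sinExtremum]; field_simp; ring
  rw [this, Real.sin_add_pi_div_two, Real.cos_int_mul_pi]

lemma strictMono_sinExtremum (hN : N ≠ 0) : StrictMono (sinExtremum N φ) := fun j k hjk => by
  have : (j : ℝ) < k := by exact_mod_cast hjk
  simp only [sinExtremum]
  gcongr

lemma sinExtremum_add_two_mul (hN : N ≠ 0) (j : ℤ) :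
    sinExtremum N φ (j + 2 * N) = sinExtremum N φ j + 2 * π := by
  simp only [sinExtremum]; push_cast; field_simp; ring

lemma exists_sinExtremum_nonpos_pos (hN : N ≠ 0) :
    ∃ j, sinExtremum N φ j ≤ 0 ∧ 0 < sinExtremum N φ (j + 1) := by
  have hnonpos (j : ℤ) : sinExtremum N φ j ≤ 0 ↔ (j : ℝ) ≤ (φ - π / 2) / π := by
    simp only [sinExtremum, div_le_iff₀ (by positivity : (0 : ℝ) < N), zero_mul,
      le_div_iff₀ Real.pi_pos]
    constructor <;> intro <;> linarith
  refine ⟨⌊(φ - π / 2) / π⌋, (hnonpos _).2 (Int.floor_le _), not_le.1 fun h => ?_⟩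
  have := (hnonpos _).1 h
  push_cast at this
  linarith [Int.lt_floor_add_one ((φ - π / 2) / π)]

end sinExtremum

lemma mul_neg_of_one_lt_of_abs_le_one {R a b : ℝ} (hR : 1 < R) (ha : |a| ≤ 1) (hb : |b| ≤ 1)
    (j : ℤ) : (R * (-1) ^ j - a) * (R * (-1) ^ (j + 1) - b) < 0 := by
  rw [abs_le] at ha hb
  rw [zpow_add_one₀ (by norm_num), neg_one_zpow_eq_ite]
  split_ifs <;> nlinarith

/-- `f` is a trigonometric polynomial of degree at most `N`: `e^{iNθ} f(θ) = H(e^{iθ})` for a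
complex polynomial `H` of degree at most `2N`. -/
def IsTrigPoly (N : ℕ) (f : ℝ → ℂ) : Prop :=
  ∃ H : ℂ[X], H.natDegree ≤ 2 * N ∧ ∀ θ : ℝ, H.eval (exp (θ * I)) = exp (N * θ * I) * f θ

namespace IsTrigPoly

variable {N M : ℕ} {f g : ℝ → ℂ}

lemma const (N : ℕ) (c : ℂ) : IsTrigPoly N fun _ => c := by
  refine ⟨C c * X ^ N, (natDegree_C_mul_le _ _).trans (by rw [natDegree_X_pow]; omega),
    fun θ => ?_⟩
  rw [eval_mul, eval_C, eval_pow, eval_X, ← exp_nat_mul]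
  ring_nf

lemma add (hf : IsTrigPoly N f) (hg : IsTrigPoly N g) : IsTrigPoly N fun θ => f θ + g θ := by
  obtain ⟨F, hF, eF⟩ := hf
  obtain ⟨G, hG, eG⟩ := hg
  exact ⟨F + G, (natDegree_add_le _ _).trans (max_le hF hG),
    fun θ => by rw [eval_add, eF θ, eG θ, mul_add]⟩

lemma mul (hf : IsTrigPoly N f) (hg : IsTrigPoly M g) :
    IsTrigPoly (N + M) fun θ => f θ * g θ := by
  obtain ⟨F, hF, eF⟩ := hf
  obtain ⟨G, hG, eG⟩ := hg
  refine ⟨F * G, natDegree_mul_le.trans (by omega), fun θ => ?_⟩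
  rw [eval_mul, eF θ, eG θ, Nat.cast_add, add_mul, add_mul, exp_add]
  ring

lemma const_mul (c : ℂ) (hf : IsTrigPoly N f) : IsTrigPoly N fun θ => c * f θ := by
  simpa using (const 0 c).mul hf

lemma sub (hf : IsTrigPoly N f) (hg : IsTrigPoly N g) : IsTrigPoly N fun θ => f θ - g θ := by
  simpa [sub_eq_add_neg] using hf.add (hg.const_mul (-1))

lemma mono (hNM : N ≤ M) (hf : IsTrigPoly N f) : IsTrigPoly M f := by
  simpa [Nat.add_sub_cancel' hNM] using hf.mul (const (M - N) 1)

lemma pow (hf : IsTrigPoly N f) (k : ℕ) : IsTrigPoly (k * N) fun θ => f θ ^ k := by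
  induction k with
  | zero => simpa using const 0 1
  | succ k ih => simpa [pow_succ, add_mul] using ih.mul hf

lemma sum {ι : Type*} (s : Finset ι) {f : ι → ℝ → ℂ} (hf : ∀ i ∈ s, IsTrigPoly N (f i)) :
    IsTrigPoly N fun θ => ∑ i ∈ s, f i θ := by
  induction s using Finset.cons_induction with
  | empty => simpa using const N 0
  | cons i s his ih =>
    simp only [Finset.sum_cons]
    exact (hf i (by simp)).add (ih fun j hj => hf j (by simp [hj]))

lemma prod {ι : Type*} (s : Finset ι) {f : ι → ℝ → ℂ} {m : ι → ℕ}
    (hf : ∀ i ∈ s, IsTrigPoly (m i) (f i)) :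
    IsTrigPoly (∑ i ∈ s, m i) fun θ => ∏ i ∈ s, f i θ := by
  induction s using Finset.cons_induction with
  | empty => simpa using const 0 1
  | cons i s his ih =>
    simp only [Finset.prod_cons, Finset.sum_cons]
    exact (hf i (by simp)).mul (ih fun j hj => hf j (by simp [hj]))

lemma exp_int_mul {k : ℤ} (hk : |k| ≤ N) : IsTrigPoly N fun θ => exp (k * θ * I) := by
  rw [abs_le] at hk
  refine ⟨X ^ (N + k).toNat, by rw [natDegree_X_pow]; omega, fun θ => ?_⟩
  have hcast : (((N : ℤ) + k).toNat : ℂ) = N + k := by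
    rw [← Int.cast_natCast, Int.toNat_of_nonneg (by omega)]
    push_cast
    ring
  rw [eval_pow, eval_X, ← exp_nat_mul, ← exp_add, hcast]
  ring_nf

lemma sin_nat_mul_add (N : ℕ) (φ : ℝ) :
    IsTrigPoly N fun θ => (Real.sin (N * θ + φ) : ℂ) := by
  convert ((exp_int_mul (N := N) (k := -N) (by simp)).const_mul (exp (-φ * I) * I / 2)).sub
    ((exp_int_mul (N := N) (k := N) (by simp)).const_mul (exp (φ * I) * I / 2)) using 2 with θ
  have e₁ : exp (-((N * θ + φ : ℝ) : ℂ) * I) = exp (-φ * I) * exp (((-N : ℤ) : ℂ) * θ * I) := by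
    rw [← exp_add]; push_cast; ring_nf
  have e₂ : exp (((N * θ + φ : ℝ) : ℂ) * I) = exp (φ * I) * exp (((N : ℤ) : ℂ) * θ * I) := by
    rw [← exp_add]; push_cast; ring_nf
  rw [ofReal_sin, Complex.sin, e₁, e₂]
  ring

lemma continuous (hf : IsTrigPoly N f) : Continuous f := by
  obtain ⟨H, -, eH⟩ := hf
  have : f = fun θ : ℝ => exp (-(N * θ * I)) * H.eval (exp (θ * I)) := by
    ext θ; rw [eH, ← mul_assoc, ← exp_add, neg_add_cancel, exp_zero, one_mul]
  rw [this]
  fun_prop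

lemma mul_cos_add_mul_sin_add (c₁ c₂ c₃ : ℝ) :
    IsTrigPoly 1 fun θ => ((c₁ * Real.cos θ + c₂ * Real.sin θ + c₃ : ℝ) : ℂ) := by
  have hcos := (sin_nat_mul_add 1 (π / 2)).const_mul c₁
  have hsin := (sin_nat_mul_add 1 0).const_mul c₂
  convert (hcos.add hsin).add (const 1 c₃) using 2 with θ
  simp [Real.sin_add_pi_div_two]

lemma mvPolynomial_eval {σ : Type*} (p : MvPolynomial σ ℝ) {g : ℝ → σ → ℝ}
    (hg : ∀ i, IsTrigPoly 1 fun θ => (g θ i : ℂ)) :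
    IsTrigPoly p.totalDegree fun θ => (MvPolynomial.eval (g θ) p : ℂ) := by
  simp only [MvPolynomial.eval_eq, ofReal_sum, ofReal_mul, ofReal_prod, ofReal_pow]
  refine sum _ fun s hs => (const_mul _ ?_)
  refine (prod s.support fun i _ => (hg i).pow (s i)).mono ?_
  simpa [Finsupp.sum] using MvPolynomial.le_totalDegree hs

lemma eq_zero_of_double_zero (hf : IsTrigPoly N f)
    (hf0 : f 0 = 0) (hf0' : HasDerivAt f 0 0) (S : Finset ℝ) (hS : ↑S ⊆ Set.Ioo 0 (2 * π))
    (hSf : ∀ θ ∈ S, f θ = 0) (hcard : 2 * N < S.card + 2) (θ : ℝ) : f θ = 0 := by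
  obtain ⟨H, hH, eH⟩ := hf
  have hroot : H.IsRoot 1 := by simpa [hf0] using eH 0
  have hroot' : H.derivative.IsRoot 1 := by
    have hexp : HasDerivAt (fun t : ℝ => exp (t * I)) I 0 := by
      simpa using ((hasDerivAt_id (0 : ℝ)).ofReal_comp.mul_const I).cexp
    have h₁ : HasDerivAt (fun t : ℝ => H.eval (exp (t * I))) (H.derivative.eval 1 * I) 0 := by
      simpa [Function.comp_def] using (H.hasDerivAt (exp ((0 : ℝ) * I))).comp (0 : ℝ) hexp
    have h₂ : HasDerivAt (fun t : ℝ => exp (N * t * I) * f t) 0 0 := by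
      simpa [hf0, Pi.mul_def] using
        (((hasDerivAt_id (0 : ℝ)).ofReal_comp.const_mul (N : ℂ)).mul_const I).cexp.mul hf0'
    rw [funext eH] at h₁
    simpa [IsRoot, I_ne_zero] using h₁.unique h₂
  have hinj : Set.InjOn (fun t : ℝ => exp (t * I)) (Set.Ico 0 (2 * π)) :=
    fun s hs t ht hst => Circle.exp_injOn_Ico (by simp) hs ht (Circle.ext hst)
  have hS' : ↑S ⊆ Set.Ico 0 (2 * π) := hS.trans Set.Ioo_subset_Ico_self
  have hH0 : H = 0 := by
    refine eq_zero_of_natDegree_lt_card_add_two hroot hroot'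
      (S.image fun t : ℝ => exp (t * I)) ?_ ?_ ?_
    · simp only [Finset.mem_image, not_exists, not_and]
      intro t ht h1
      have := hinj (hS' ht) (show (0 : ℝ) ∈ Set.Ico 0 (2 * π) by simp [Real.pi_pos])
        (by simpa using h1)
      exact (hS ht).1.ne' this
    · simp only [Finset.mem_image, forall_exists_index, and_imp, forall_apply_eq_imp_iff₂]
      intro t ht
      simp [IsRoot, eH, hSf t ht]
    · rw [Finset.card_image_of_injOn (hinj.mono hS')]
      omega
  simpa [hH0, exp_ne_zero] using (eH θ).symm

end IsTrigPoly

theorem sq_deriv_add_sq_mul_sq_le_of_isTrigPoly {N : ℕ} (hN : 1 ≤ N) {q : ℝ → ℝ} {D : ℝ}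
    (hq : IsTrigPoly N fun θ => (q θ : ℂ)) (hq1 : ∀ θ, |q θ| ≤ 1) (hD : HasDerivAt q D 0) :
    D ^ 2 + N ^ 2 * q 0 ^ 2 ≤ N ^ 2 := by
  by_contra! hlt
  have hN0 : N ≠ 0 := by omega
  have hNpos : (0 : ℝ) < N := by exact_mod_cast hN
  obtain ⟨R, φ, hR, hRcos, hRsin⟩ := exists_one_lt_mul_cos_mul_sin (u := D / N) (v := q 0) (by
    rw [div_pow, ← sub_pos]
    have : D ^ 2 / N ^ 2 + q 0 ^ 2 - 1 = (D ^ 2 + N ^ 2 * q 0 ^ 2 - N ^ 2) / N ^ 2 := by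
      field_simp
    rw [this]
    exact div_pos (by linarith) (by positivity))
  let h : ℝ → ℝ := fun θ => R * Real.sin (N * θ + φ) - q θ
  have h_trig : IsTrigPoly N fun θ => (h θ : ℂ) := by
    simpa [h] using ((IsTrigPoly.sin_nat_mul_add N φ).const_mul R).sub hq
  have h0 : h 0 = 0 := by simp [h, hRsin]
  have h0' : HasDerivAt h 0 0 := by
    have h' := ((((hasDerivAt_id (0 : ℝ)).const_mul (N : ℝ)).add_const φ).sin.const_mul R).sub hD
    rwa [id, mul_zero, zero_add, mul_one, ← mul_assoc, hRcos, div_mul_cancel₀ _ hNpos.ne',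
      sub_self] at h'
  let v := sinExtremum N φ
  have hsign (j : ℤ) : h (v j) * h (v (j + 1)) < 0 := by
    simp only [h, v, sin_mul_sinExtremum_add φ hN0]
    exact mul_neg_of_one_lt_of_abs_le_one hR (hq1 _) (hq1 _) j
  obtain ⟨j₀, hj₀, hj₀'⟩ := exists_sinExtremum_nonpos_pos φ hN0
  obtain ⟨S, hS_card, hS_sub, hS_zero⟩ := exists_finset_zeros_of_alternating
    (by simpa [Function.comp_def] using continuous_re.comp h_trig.continuous)
    (strictMono_sinExtremum φ hN0) hsign (j₀ + 1) (2 * N - 1)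
  have hS : ↑S ⊆ Set.Ioo 0 (2 * π) := by
    refine hS_sub.trans (Set.Ioo_subset_Ioo hj₀'.le ?_)
    rw [show j₀ + 1 + ((2 * N - 1 : ℕ) : ℤ) = j₀ + 2 * N by omega,
      sinExtremum_add_two_mul φ hN0]
    linarith
  have := h_trig.eq_zero_of_double_zero (by simp [h0]) (by simpa using h0'.ofReal_comp) S hS
    (by simpa using hS_zero) (by omega) (v j₀)
  simpa [ofReal_eq_zero.1 this] using hsign j₀

theorem stmt_10 {n : ℕ} (K : Set (EuclideanSpace ℝ (Fin n)))
    (p : MvPolynomial (Fin n) ℝ) (d : ℕ)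
    (hd : p.totalDegree = d) (hd1 : 1 ≤ d)
    (hp : ∀ z ∈ K, |MvPolynomial.eval z p| ≤ 1)
    (x y a : EuclideanSpace ℝ (Fin n)) (b : ℝ)
    (hins : InscribedEllipse K x y a b) :
    b * |dirDeriv p x y| ≤ (d : ℝ) * Real.sqrt (1 - (MvPolynomial.eval x p) ^ 2) := by
  let E : ℝ → EuclideanSpace ℝ (Fin n) := fun θ => Real.cos θ • a + (b * Real.sin θ) • y + (x - a)
  have hE (θ : ℝ) (i : Fin n) : E θ i = a i * Real.cos θ + b * y i * Real.sin θ + (x i - a i) := by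
    simp only [E, PiLp.add_apply, PiLp.smul_apply, PiLp.sub_apply, smul_eq_mul]
    ring
  have hE0 : E 0 = x := by simp [E]
  have hE' (i : Fin n) : HasDerivAt (fun θ => E θ i) (b * y i) 0 := by
    simp only [hE]
    simpa using (((Real.hasDerivAt_cos 0).const_mul (a i)).add
      ((Real.hasDerivAt_sin 0).const_mul (b * y i))).add_const (x i - a i)
  have hq_trig : IsTrigPoly d fun θ => (MvPolynomial.eval (E θ) p : ℂ) :=
    hd ▸ IsTrigPoly.mvPolynomial_eval p fun i => by
      simpa only [hE] using IsTrigPoly.mul_cos_add_mul_sin_add (a i) (b * y i) (x i - a i)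
  have hq_deriv : HasDerivAt (fun θ => MvPolynomial.eval (E θ) p) (b * dirDeriv p x y) 0 := by
    convert MvPolynomial.hasDerivAt_eval hE' p using 1
    simp only [hE0, dirDeriv, Finset.mul_sum]
    exact Finset.sum_congr rfl fun i _ => by ring
  have key := sq_deriv_add_sq_mul_sq_le_of_isTrigPoly hd1 hq_trig (fun θ => hp _ (hins θ))
    hq_deriv
  rw [hE0] at key
  calc b * |dirDeriv p x y| ≤ |b * dirDeriv p x y| := by
        rw [abs_mul]; exact mul_le_mul_of_nonneg_right (le_abs_self b) (abs_nonneg _)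
    _ ≤ d * √(1 - MvPolynomial.eval x p ^ 2) := abs_le_mul_sqrt_one_sub_sq d.cast_nonneg key
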